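/- arXiv:2601.08889 — 4 statements merged into one kernel-verified Lean document; each statement's English description precedes it below -/
import Mathlib

section
/- There exists a real constant K such that ∑_{p prime, 2<p≤q} ln(1 + 1/(p−2)) − ln ln q tends to K as q → ∞. -/
/-!
Legendre's formula `log n! = ∑_{p ≤ n} v_p(n!) log p`, with `n/p - 1 ≤ v_p(n!) ≤ n/p + 2n/p²`,
together with `log n! = n log n + O(n)` and Chebyshev's bound `θ(n) ≤ n log 4`, gives Mertens'
first theorem `∑_{p ≤ n} log p / p = log n + O(1)`. Summation by parts against `1 / log` turns it
into Mertens' second theorem: `∑_{p ≤ n} 1/p - log log n` converges. Finally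
`log (1 + 1/(p-2)) = 1/p + O(1/p²)`, and the error terms form a convergent series.
-/

open Filter Topology

open Finset Real
open scoped Nat

namespace Mertens

theorem log_factorial_eq_sum_primesLE (n : ℕ) :
    log (n ! : ℝ) = ∑ p ∈ n.primesLE, ((n !).factorization p : ℝ) * log p := by
  rw [Real.log_nat_eq_sum_factorization]
  refine Finsupp.sum_of_support_subset _ (fun p hp => ?_) _ (fun p _ => by simp)
  rw [Nat.support_factorization, Nat.mem_primeFactors] at hp
  exact Nat.mem_primesLE.mpr ⟨(hp.1.dvd_factorial).mp hp.2.1, hp.1⟩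

theorem div_le_factorization_factorial {p : ℕ} (hp : p.Prime) (n : ℕ) :
    n / p ≤ (n !).factorization p := by
  rcases lt_or_ge n p with hnp | hpn
  · simp [Nat.div_eq_of_lt hnp]
  rw [Nat.factorization_factorial hp (lt_add_one (Nat.log p n))]
  have hlog : 1 ≤ Nat.log p n := Nat.le_log_of_pow_le hp.one_lt (x := 1) (by simpa using hpn)
  simpa using single_le_sum (f := fun i => n / p ^ i) (fun _ _ => Nat.zero_le _)
    (mem_Ico.mpr ⟨le_rfl, Nat.lt_add_one_iff.mpr hlog⟩)

theorem div_sub_one_le_factorization_factorial {p : ℕ} (hp : p.Prime) (n : ℕ) :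
    (n : ℝ) / p - 1 ≤ (n !).factorization p := by
  have hp0 : (0 : ℝ) < p := by exact_mod_cast hp.pos
  have hlt : (n : ℝ) < (n / p : ℕ) * p + p := by exact_mod_cast Nat.lt_div_mul_add hp.pos
  calc (n : ℝ) / p - 1 ≤ (n / p : ℕ) := by
        rw [div_sub_one hp0.ne', div_le_iff₀ hp0]; linarith
    _ ≤ (n !).factorization p := by exact_mod_cast div_le_factorization_factorial hp n

theorem factorization_factorial_le {p : ℕ} (hp : p.Prime) (n : ℕ) :
    ((n !).factorization p : ℝ) ≤ n / p + 2 * n / p ^ 2 := by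
  have hp2 : (2 : ℝ) ≤ p := by exact_mod_cast hp.two_le
  calc ((n !).factorization p : ℝ) ≤ (n / (p - 1) : ℕ) := by
        exact_mod_cast Nat.factorization_factorial_le_div_pred hp n
    _ ≤ n / (p - 1 : ℕ) := Nat.cast_div_le
    _ ≤ n / p + 2 * n / p ^ 2 := by
        rw [Nat.cast_sub hp.one_le, Nat.cast_one, div_add_div _ _ (by positivity) (by positivity),
          div_le_div_iff₀ (by linarith) (by positivity)]
        have : (0 : ℝ) ≤ n := n.cast_nonneg
        nlinarith [mul_nonneg this (sub_nonneg.mpr hp2)]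

theorem log_div_sq_nonneg (k : ℕ) : 0 ≤ log k / (k : ℝ) ^ 2 :=
  div_nonneg (log_natCast_nonneg k) (by positivity)

theorem summable_log_div_sq : Summable fun k : ℕ => log k / (k : ℝ) ^ 2 := by
  refine Summable.of_nonneg_of_le log_div_sq_nonneg (fun k => ?_)
    ((summable_nat_rpow.mpr (by norm_num : (1 / 2 - 2 : ℝ) < -1)).mul_left 2)
  rcases k.eq_zero_or_pos with rfl | hk
  · simp; positivity
  have hk : (0 : ℝ) < k := by exact_mod_cast hk
  have hlog := log_le_rpow_div k.cast_nonneg (by norm_num : (0 : ℝ) < 1 / 2)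
  calc log k / (k : ℝ) ^ 2 ≤ (k : ℝ) ^ (1 / 2 : ℝ) / (1 / 2) / (k : ℝ) ^ 2 := by gcongr
    _ = 2 * (k : ℝ) ^ (1 / 2 - 2 : ℝ) := by
        rw [show (1 / 2 - 2 : ℝ) = 1 / 2 - (2 : ℕ) by norm_num, rpow_sub_natCast hk.ne']
        ring

noncomputable def primeLogDivSum (n : ℕ) : ℝ := ∑ p ∈ n.primesLE, log p / p

theorem primeLogDivSum_le (n : ℕ) : primeLogDivSum n ≤ log n + log 4 := by
  rcases n.eq_zero_or_pos with rfl | hn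
  · simp [primeLogDivSum]; positivity
  have hn : (0 : ℝ) < n := by exact_mod_cast hn
  refine le_of_mul_le_mul_left ?_ hn
  calc n * primeLogDivSum n = ∑ p ∈ n.primesLE, (n / p : ℝ) * log p := by
        rw [primeLogDivSum, mul_sum]; exact sum_congr rfl fun p _ => by ring
    _ ≤ ∑ p ∈ n.primesLE, (((n !).factorization p : ℝ) + 1) * log p := by
        gcongr with p hp
        linarith [div_sub_one_le_factorization_factorial (Nat.prime_of_mem_primesLE hp) n]
    _ = log (n ! : ℝ) + Chebyshev.theta n := by
        rw [log_factorial_eq_sum_primesLE, Chebyshev.theta_eq_sum_primesLE_log, ← sum_add_distrib]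
        exact sum_congr rfl fun p _ => by ring
    _ ≤ n * log n + log 4 * n := by
        gcongr
        · rw [← log_pow]
          exact log_le_log (by positivity) (by exact_mod_cast Nat.factorial_le_pow n)
        · exact Chebyshev.theta_le_log4_mul_x hn.le
    _ = n * (log n + log 4) := by ring

theorem log_sub_le_primeLogDivSum (n : ℕ) :
    log n - 1 - 2 * ∑' k : ℕ, log k / (k : ℝ) ^ 2 ≤ primeLogDivSum n := by
  have hS : 0 ≤ ∑' k : ℕ, log k / (k : ℝ) ^ 2 := tsum_nonneg log_div_sq_nonneg
  rcases n.eq_zero_or_pos with rfl | hn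
  · simp [primeLogDivSum]; linarith
  have hn' : (0 : ℝ) < n := by exact_mod_cast hn
  refine le_of_mul_le_mul_left ?_ hn'
  calc n * (log n - 1 - 2 * ∑' k : ℕ, log k / (k : ℝ) ^ 2)
      ≤ log (n ! : ℝ) - 2 * n * ∑ p ∈ n.primesLE, log p / (p : ℝ) ^ 2 := by
        have hstirling := Stirling.le_log_factorial_stirling hn.ne'
        have hsub : ∑ p ∈ n.primesLE, log p / (p : ℝ) ^ 2 ≤ ∑' k : ℕ, log k / (k : ℝ) ^ 2 :=
          summable_log_div_sq.sum_le_tsum _ fun k _ => log_div_sq_nonneg k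
        have : 0 ≤ log n / 2 + log (2 * π) / 2 := by
          have := log_natCast_nonneg n
          have : 0 ≤ log (2 * π) := log_nonneg (by linarith [pi_gt_three])
          positivity
        nlinarith
    _ ≤ ∑ p ∈ n.primesLE, ((n / p : ℝ) + 2 * n / p ^ 2) * log p
          - 2 * n * ∑ p ∈ n.primesLE, log p / (p : ℝ) ^ 2 := by
        rw [log_factorial_eq_sum_primesLE]
        gcongr with p hp
        exact factorization_factorial_le (Nat.prime_of_mem_primesLE hp) n
    _ = n * primeLogDivSum n := by
        rw [primeLogDivSum, mul_sum, mul_sum, ← sum_sub_distrib]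
        exact sum_congr rfl fun p _ => by ring

theorem primeLogDivSum_sub_log_isBigO :
    (fun n => primeLogDivSum n - log n) =O[atTop] fun _ => (1 : ℝ) := by
  refine Asymptotics.IsBigO.of_bound (log 4 + 1 + 2 * ∑' k : ℕ, log k / (k : ℝ) ^ 2)
    (Eventually.of_forall fun n => ?_)
  have hS : 0 ≤ ∑' k : ℕ, log k / (k : ℝ) ^ 2 := tsum_nonneg log_div_sq_nonneg
  have h4 : 0 ≤ log 4 := log_nonneg (by norm_num)
  rw [norm_one, mul_one, Real.norm_eq_abs, abs_le]
  constructor <;> linarith [primeLogDivSum_le n, log_sub_le_primeLogDivSum n]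

noncomputable def primeInvSum (n : ℕ) : ℝ := ∑ p ∈ n.primesLE, (p : ℝ)⁻¹

theorem sum_primesLE_succ (f : ℕ → ℝ) (n : ℕ) :
    ∑ p ∈ (n + 1).primesLE, f p =
      ∑ p ∈ n.primesLE, f p + if (n + 1).Prime then f (n + 1) else 0 := by
  rw [Nat.primesLE_succ]
  split_ifs <;> simp [sum_insert (Nat.notMem_primesLE n), add_comm]

theorem primeInvSum_succ_sub (n : ℕ) :
    primeInvSum (n + 1) - primeInvSum n =
      (primeLogDivSum (n + 1) - primeLogDivSum n) / log (n + 1) := by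
  simp only [primeInvSum, primeLogDivSum, sum_primesLE_succ, add_sub_cancel_left]
  split_ifs with hp
  · have : log (n + 1 : ℕ) ≠ 0 := (log_pos (by exact_mod_cast hp.one_lt)).ne'
    push_cast at this ⊢
    field_simp
  · simp

theorem abs_log_sub_log_sub_le {a b : ℝ} (ha : 0 < a) (hab : a ≤ b) :
    |log b - log a - a * (a⁻¹ - b⁻¹)| ≤ (b - a) * (a⁻¹ - b⁻¹) := by
  have hb : 0 < b := ha.trans_le hab
  have hlow := one_sub_inv_le_log_of_pos (div_pos hb ha)
  have hup := log_le_sub_one_of_pos (div_pos hb ha)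
  rw [log_div hb.ne' ha.ne', inv_div] at hlow
  rw [log_div hb.ne' ha.ne'] at hup
  have e1 : a * (a⁻¹ - b⁻¹) = 1 - a / b := by field_simp
  have e2 : (b - a) * (a⁻¹ - b⁻¹) = (b / a - 1) - (1 - a / b) := by field_simp
  rw [e1, e2, abs_le]
  constructor <;> linarith

theorem summable_sub_succ_of_antitone {f : ℕ → ℝ} (hf : Antitone f) {c : ℝ}
    (hc : ∀ n, c ≤ f n) :
    Summable fun n => f n - f (n + 1) :=
  summable_of_sum_range_le (c := f 0 - c) (fun n => sub_nonneg.mpr (hf n.le_succ))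
    (fun n => by rw [sum_range_sub']; linarith [hc n])

theorem summable_inv_log_sub_inv_log_succ :
    Summable fun n : ℕ => (log n)⁻¹ - (log (n + 1))⁻¹ := by
  have hpos (n : ℕ) : 0 < log ((n : ℝ) + 2) := log_pos (by linarith [n.cast_nonneg (α := ℝ)])
  have hanti : Antitone fun n : ℕ => (log ((n : ℝ) + 2))⁻¹ := antitone_nat_of_succ_le fun n => by
    gcongr
    · exact hpos n
    · linarith
  rw [← summable_nat_add_iff 2]
  refine (summable_sub_succ_of_antitone hanti (fun n => (inv_pos.mpr (hpos n)).le)).congr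
    fun n => ?_
  push_cast
  ring_nf

theorem tendsto_of_summable_sub_succ {u : ℕ → ℝ} (h : Summable fun n => u (n + 1) - u n) :
    Tendsto u atTop (𝓝 (u 0 + ∑' n, (u (n + 1) - u n))) :=
  (h.hasSum.tendsto_sum_nat.const_add (u 0)).congr fun n => by rw [sum_range_sub]; ring

/-- Subtracting `(A n - log n) / log n`, with `A = primeLogDivSum`, is summation by parts: it
makes the increments `O(1 / log n - 1 / log (n + 1))`, hence summable. -/
noncomputable def primeInvSumCorrected (n : ℕ) : ℝ :=
  primeInvSum n - log (log n) - (primeLogDivSum n - log n) / log n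

theorem primeInvSumCorrected_succ_sub {n : ℕ} (hn : 2 ≤ n) :
    primeInvSumCorrected (n + 1) - primeInvSumCorrected n =
      primeLogDivSum n * ((log n)⁻¹ - (log (n + 1))⁻¹) - (log (log (n + 1)) - log (log n)) := by
  have hn' : (2 : ℝ) ≤ n := by exact_mod_cast hn
  have hL : 0 < log n := log_pos (by linarith)
  have hL' : 0 < log (n + 1) := log_pos (by linarith)
  have hS := primeInvSum_succ_sub n
  simp only [primeInvSumCorrected]
  push_cast
  rw [show primeInvSum (n + 1) = primeInvSum n + (primeLogDivSum (n + 1) - primeLogDivSum n) /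
    log (n + 1) by linarith]
  field_simp
  ring

theorem log_succ_sub_log_le_one (n : ℕ) : log (n + 1) - log n ≤ 1 := by
  rcases n.eq_zero_or_pos with rfl | hn
  · simp
  have hn : (1 : ℝ) ≤ n := by exact_mod_cast hn
  rw [← log_div (by positivity) (by positivity)]
  refine (log_le_sub_one_of_pos (by positivity)).trans ?_
  rw [add_div, div_self (by positivity)]
  simpa using inv_le_one_of_one_le₀ hn

theorem summable_primeInvSumCorrected_succ_sub :
    Summable fun n => primeInvSumCorrected (n + 1) - primeInvSumCorrected n := by
  obtain ⟨C, hC⟩ := primeLogDivSum_sub_log_isBigO.bound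
  refine .of_norm_bounded_eventually_nat (summable_inv_log_sub_inv_log_succ.mul_left (C + 1)) ?_
  filter_upwards [hC, eventually_ge_atTop 2] with n hR hn
  rw [primeInvSumCorrected_succ_sub hn]
  rw [norm_one, mul_one, Real.norm_eq_abs] at hR
  have hn' : (2 : ℝ) ≤ n := by exact_mod_cast hn
  have ha : 0 < log n := log_pos (by linarith)
  have hab : log n ≤ log (n + 1) := log_le_log (by linarith) (by linarith)
  have hd : 0 ≤ (log n)⁻¹ - (log (n + 1))⁻¹ := sub_nonneg.mpr (inv_anti₀ ha hab)
  have key := abs_log_sub_log_sub_le ha hab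
  have hstep := log_succ_sub_log_le_one n
  calc ‖primeLogDivSum n * ((log n)⁻¹ - (log (n + 1))⁻¹) - (log (log (n + 1)) - log (log n))‖
      = |(primeLogDivSum n - log n) * ((log n)⁻¹ - (log (n + 1))⁻¹)
          - (log (log (n + 1)) - log (log n) - log n * ((log n)⁻¹ - (log (n + 1))⁻¹))| := by
        rw [Real.norm_eq_abs]; ring_nf
    _ ≤ |primeLogDivSum n - log n| * ((log n)⁻¹ - (log (n + 1))⁻¹)
          + (log (n + 1) - log n) * ((log n)⁻¹ - (log (n + 1))⁻¹) := by
        refine (abs_sub _ _).trans (add_le_add ?_ key)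
        rw [abs_mul, abs_of_nonneg hd]
    _ ≤ (C + 1) * ((log n)⁻¹ - (log (n + 1))⁻¹) := by
        rw [← add_mul]; gcongr

theorem tendsto_primeInvSum_sub_log_log :
    ∃ M, Tendsto (fun n => primeInvSum n - log (log n)) atTop (𝓝 M) := by
  have hv := tendsto_of_summable_sub_succ summable_primeInvSumCorrected_succ_sub
  have hR : Tendsto (fun n : ℕ => (primeLogDivSum n - log n) / log n) atTop (𝓝 0) := by
    have : (fun n : ℕ => (primeLogDivSum n - log n) / log n) =O[atTop]
        fun n : ℕ => (log n)⁻¹ := by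
      simpa [div_eq_mul_inv] using primeLogDivSum_sub_log_isBigO.mul
        (Asymptotics.isBigO_refl (fun n : ℕ => (log n)⁻¹) atTop)
    exact this.trans_tendsto
      (tendsto_log_atTop.comp tendsto_natCast_atTop_atTop).inv_tendsto_atTop
  exact ⟨_, (hv.add hR).congr fun n => by simp only [primeInvSumCorrected]; ring⟩

theorem abs_log_one_add_one_div_sub_two_sub_inv_le {x : ℝ} (hx : 3 ≤ x) :
    |log (1 + 1 / (x - 2)) - x⁻¹| ≤ 6 / x ^ 2 := by
  have hy : 0 < 1 / (x - 2) := one_div_pos.mpr (by linarith)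
  have hlow := one_sub_inv_le_log_of_pos (by linarith : 0 < 1 + 1 / (x - 2))
  have hup := log_le_sub_one_of_pos (by linarith : 0 < 1 + 1 / (x - 2))
  have e : 1 - (1 + 1 / (x - 2))⁻¹ = 1 / (x - 1) := by
    have h2 : x - 2 ≠ 0 := by linarith
    have h1 : x - 1 ≠ 0 := by linarith
    rw [show 1 + 1 / (x - 2) = (x - 1) / (x - 2) by field_simp; ring, inv_div]
    field_simp
    ring
  rw [e] at hlow
  have h1 : x⁻¹ ≤ 1 / (x - 1) := by
    rw [inv_eq_one_div]; exact one_div_le_one_div_of_le (by linarith) (by linarith)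
  have h2 : 1 / (x - 2) - x⁻¹ ≤ 6 / x ^ 2 := by
    rw [inv_eq_one_div, div_sub_div _ _ (by linarith) (by linarith),
      div_le_div_iff₀ (by nlinarith) (by positivity)]
    nlinarith
  rw [abs_le]
  constructor <;> linarith

theorem abs_oddPrime_term_sub_inv_le (k : ℕ) :
    |(if k.Prime ∧ 2 < k then log (1 + 1 / ((k : ℝ) - 2)) else 0) -
      (if k.Prime then (k : ℝ)⁻¹ else 0)| ≤ 6 / (k : ℝ) ^ 2 := by
  by_cases hk : k.Prime
  · rcases hk.two_le.eq_or_lt with rfl | h2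
    · norm_num
    · rw [if_pos ⟨hk, h2⟩, if_pos hk]
      exact abs_log_one_add_one_div_sub_two_sub_inv_le (by exact_mod_cast h2)
  · simp [hk]
    positivity

theorem tendsto_sum_range_sub_of_summable_sub {a b L : ℕ → ℝ} {K : ℝ}
    (ha : Tendsto (fun n => ∑ k ∈ range (n + 1), a k - L n) atTop (𝓝 K))
    (hab : Summable fun k => b k - a k) :
    Tendsto (fun n => ∑ k ∈ range (n + 1), b k - L n) atTop (𝓝 (K + ∑' k, (b k - a k))) :=
  (ha.add (hab.hasSum.tendsto_sum_nat.comp (tendsto_add_atTop_nat 1))).congr fun n => by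
    simp only [Function.comp_apply, sum_sub_distrib]
    ring

end Mertens

/-- There is a constant `K` such that
`∑_{p prime, 2 < p ≤ q} ln(1 + 1/(p-2)) - ln ln q → K` as `q → ∞`. -/
theorem sum_log_odd_primes_asymp :
    ∃ K : ℝ, Tendsto (fun q : ℕ =>
        (∑ p ∈ (Finset.range (q + 1)).filter (fun p => p.Prime ∧ 2 < p),
          Real.log (1 + 1 / ((p : ℝ) - 2))) - Real.log (Real.log q))
      atTop (𝓝 K) := by
  obtain ⟨M, hM⟩ := Mertens.tendsto_primeInvSum_sub_log_log
  have hsummable : Summable fun k : ℕ =>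
      (if k.Prime ∧ 2 < k then Real.log (1 + 1 / ((k : ℝ) - 2)) else 0) -
        (if k.Prime then (k : ℝ)⁻¹ else 0) :=
    .of_norm_bounded ((Real.summable_nat_pow_inv.mpr one_lt_two).mul_left 6) fun k => by
      simpa [div_eq_mul_inv] using Mertens.abs_oddPrime_term_sub_inv_le k
  simp only [Mertens.primeInvSum, Nat.primesLE_eq_filter_range, Finset.sum_filter] at hM
  simp only [Finset.sum_filter]
  exact ⟨_, Mertens.tendsto_sum_range_sub_of_summable_sub hM hsummable⟩
end

section
/- The mean value of h exists and equals the reciprocal of the twin prime constant: lim_{x→∞} (1/x) ∑_{n≤x} h(n) = ∏_{p prime, p>2} (1 + 1/(p(p−2))) = 1/C₂. -/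
/-
Write `h = g * ζ`, where `g` is the multiplicative function supported on squarefree numbers with
`g p = 1/(p-2)` at odd primes and `g 2 = 0`. Swapping the sums,
`(1/x) ∑_{n ≤ x} h n = ∑_{d ≤ x} g d ⌊x/d⌋ / x`, which tends to `∑ g d / d` by dominated
convergence. This series converges because its partial sums up to `N` are at most
`∏_{p < N} (1 + g p / p) ≤ exp (∑_p g p / p)`, and its Euler product is
`∏_{p > 2} (1 + 1/(p(p-2)))`. Since `(p-1)² - 1 = p(p-2)`, each Euler factor is the reciprocal of
the corresponding factor of `C₂`.
-/

open Filter Topology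

/-- `h n = ∏_{p ∣ n, p odd prime} (p-1)/(p-2)`, with `h n = 1` when `n` has no odd prime
divisor. -/
noncomputable def h (n : ℕ) : ℝ :=
  ∏ p ∈ n.primeFactors.filter (fun p => 2 < p), ((p : ℝ) - 1) / ((p : ℝ) - 2)

/-- The twin prime constant `C₂ = ∏_{p prime, p > 2} (1 - 1/(p-1)²)`. -/
noncomputable def C2 : ℝ :=
  ∏' p : {p : ℕ // p.Prime ∧ 2 < p}, (1 - 1 / (((p : ℕ) : ℝ) - 1) ^ 2)

open Finset
open scoped ArithmeticFunction.zeta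

theorem tendsto_natCast_div_div_self (d : ℕ) :
    Tendsto (fun N : ℕ => ((N / d : ℕ) : ℝ) / N) atTop (𝓝 (1 / d)) := by
  rcases d.eq_zero_or_pos with rfl | hd
  · simp -- `N / 0 = 0` and `1 / 0 = 0`
  have hy : Tendsto (fun N : ℕ => (N : ℝ) / d) atTop atTop :=
    tendsto_natCast_atTop_atTop.atTop_div_const (by positivity)
  refine ((tendsto_nat_floor_div_atTop.comp hy).div_const (d : ℝ)).congr fun N => ?_
  simp only [Function.comp_apply, Nat.floor_div_eq_div]
  field_simp

theorem natCast_div_div_self_le (N d : ℕ) : ((N / d : ℕ) : ℝ) / N ≤ 1 / d := by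
  rcases N.eq_zero_or_pos with rfl | hN
  · simp
  calc ((N / d : ℕ) : ℝ) / N ≤ ((N : ℝ) / d) / N := by gcongr; exact Nat.cast_div_le
    _ = 1 / d := by field_simp

namespace ArithmeticFunction

section CommMonoidWithZero

variable {R : Type*} [CommMonoidWithZero R]

def squarefreeProdPrimeFactors (w : ℕ → R) : ArithmeticFunction R where
  toFun n := if Squarefree n then ∏ p ∈ n.primeFactors, w p else 0
  map_zero' := if_neg not_squarefree_zero

variable (w : ℕ → R)

theorem squarefreeProdPrimeFactors_apply (n : ℕ) :
    squarefreeProdPrimeFactors w n = if Squarefree n then ∏ p ∈ n.primeFactors, w p else 0 :=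
  rfl

theorem isMultiplicative_squarefreeProdPrimeFactors :
    (squarefreeProdPrimeFactors w).IsMultiplicative := by
  refine ⟨by simp [squarefreeProdPrimeFactors_apply], fun {m n} hmn => ?_⟩
  simp only [squarefreeProdPrimeFactors_apply, Nat.squarefree_mul hmn]
  split_ifs with hm hn <;> try simp_all
  rw [hmn.primeFactors_mul, prod_union hmn.disjoint_primeFactors]

theorem squarefreeProdPrimeFactors_apply_prime {p : ℕ} (hp : p.Prime) :
    squarefreeProdPrimeFactors w p = w p := by
  rw [squarefreeProdPrimeFactors_apply, if_pos hp.squarefree, hp.primeFactors, prod_singleton]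

theorem squarefreeProdPrimeFactors_apply_prime_pow_of_two_le {p k : ℕ} (hp : p.Prime)
    (hk : 2 ≤ k) : squarefreeProdPrimeFactors w (p ^ k) = 0 := by
  rw [squarefreeProdPrimeFactors_apply, if_neg]
  exact fun hsq => by have := (Nat.squarefree_pow_iff hp.ne_one (by omega)).mp hsq; omega

end CommMonoidWithZero

section CommSemiring

variable {R : Type*} [CommSemiring R] (w : ℕ → R)

theorem sum_squarefreeProdPrimeFactors_prime_pow {p : ℕ} (hp : p.Prime) {s : Finset ℕ}
    (hs : {0, 1} ⊆ s) : ∑ i ∈ s, squarefreeProdPrimeFactors w (p ^ i) = 1 + w p := by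
  rw [← sum_subset hs fun i _ hi => squarefreeProdPrimeFactors_apply_prime_pow_of_two_le w hp
      (by simp at hi; omega), sum_pair zero_ne_one, pow_zero, pow_one,
    (isMultiplicative_squarefreeProdPrimeFactors w).map_one,
    squarefreeProdPrimeFactors_apply_prime w hp]

theorem squarefreeProdPrimeFactors_mul_zeta :
    squarefreeProdPrimeFactors w * (ζ : ArithmeticFunction R) = prodPrimeFactors (1 + w ·) := by
  refine (IsMultiplicative.eq_iff_eq_on_prime_powers _ ((isMultiplicative_squarefreeProdPrimeFactors
    w).mul isMultiplicative_zeta.natCast) _ (IsMultiplicative.prodPrimeFactors _)).mpr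
    fun p k hp => ?_
  rcases k.eq_zero_or_pos with rfl | hk
  · simp only [pow_zero, ((isMultiplicative_squarefreeProdPrimeFactors w).mul
      isMultiplicative_zeta.natCast).map_one, (IsMultiplicative.prodPrimeFactors _).map_one]
  rw [coe_mul_zeta_apply, Nat.sum_divisors_prime_pow hp,
    sum_squarefreeProdPrimeFactors_prime_pow w hp (by intro i; simp; omega),
    prodPrimeFactors_apply (pow_ne_zero _ hp.ne_zero), Nat.primeFactors_prime_pow hk.ne' hp,
    prod_singleton]

end CommSemiring

theorem squarefreeProdPrimeFactors_div_natCast {K : Type*} [Semifield K] (w : ℕ → K) (n : ℕ) :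
    squarefreeProdPrimeFactors (fun p => w p / p) n = squarefreeProdPrimeFactors w n / n := by
  simp only [squarefreeProdPrimeFactors_apply]
  split_ifs with hn
  · rw [prod_div_distrib, ← Nat.cast_prod, Nat.prod_primeFactors_of_squarefree hn]
  · rw [zero_div]

section Nonneg

variable {w : ℕ → ℝ} (hw : ∀ p, 0 ≤ w p)
include hw

theorem squarefreeProdPrimeFactors_nonneg (n : ℕ) : 0 ≤ squarefreeProdPrimeFactors w n := by
  rw [squarefreeProdPrimeFactors_apply]
  split_ifs
  exacts [prod_nonneg fun p _ => hw p, le_rfl]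

theorem sum_range_squarefreeProdPrimeFactors_le (N : ℕ) :
    ∑ n ∈ range N, squarefreeProdPrimeFactors w n ≤ ∏ p ∈ N.primesBelow, (1 + w p) := by
  set m := ∏ p ∈ N.primesBelow, p
  have hm : m ≠ 0 := prod_ne_zero_iff.mpr fun p hp => (Nat.prime_of_mem_primesBelow hp).ne_zero
  have hdvd : ∀ n ∈ range N, squarefreeProdPrimeFactors w n ≠ 0 → n ∈ m.divisors := by
    intro n hn hgn
    have hsq : Squarefree n := by
      by_contra hsq
      exact hgn (by rw [squarefreeProdPrimeFactors_apply, if_neg hsq])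
    refine Nat.mem_divisors.mpr ⟨?_, hm⟩
    rw [← Nat.prod_primeFactors_of_squarefree hsq]
    refine prod_dvd_prod_of_subset _ _ _ fun p hp => Nat.mem_primesBelow.mpr
      ⟨(Nat.le_of_mem_primeFactors hp).trans_lt (mem_range.mp hn), Nat.prime_of_mem_primeFactors hp⟩
  calc ∑ n ∈ range N, squarefreeProdPrimeFactors w n
      = ∑ n ∈ range N with n ∈ m.divisors, squarefreeProdPrimeFactors w n :=
        (sum_filter_of_ne hdvd).symm
    _ ≤ ∑ d ∈ m.divisors, squarefreeProdPrimeFactors w d :=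
        sum_le_sum_of_subset_of_nonneg (fun d hd => (mem_filter.mp hd).2)
          fun d _ _ => squarefreeProdPrimeFactors_nonneg hw d
    _ = ∏ p ∈ N.primesBelow, (1 + w p) := by
        rw [← coe_mul_zeta_apply, squarefreeProdPrimeFactors_mul_zeta, prodPrimeFactors_apply hm,
          Nat.primeFactors_prod fun p hp => Nat.prime_of_mem_primesBelow hp]

theorem summable_squarefreeProdPrimeFactors (hsum : Summable w) :
    Summable (squarefreeProdPrimeFactors w) := by
  refine summable_of_sum_range_le (c := Real.exp (∑' p, w p))
    (squarefreeProdPrimeFactors_nonneg hw) fun N =>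
    (sum_range_squarefreeProdPrimeFactors_le hw N).trans ?_
  calc ∏ p ∈ N.primesBelow, (1 + w p)
      ≤ ∏ p ∈ N.primesBelow, Real.exp (w p) :=
        prod_le_prod (fun p _ => by linarith [hw p]) fun p _ => by
          linarith [Real.add_one_le_exp (w p)]
    _ = Real.exp (∑ p ∈ N.primesBelow, w p) := (Real.exp_sum _ _).symm
    _ ≤ Real.exp (∑' p, w p) := Real.exp_le_exp.mpr (hsum.sum_le_tsum _ fun p _ => hw p)

theorem one_le_tsum_squarefreeProdPrimeFactors (hsum : Summable (squarefreeProdPrimeFactors w)) :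
    1 ≤ ∑' n, squarefreeProdPrimeFactors w n :=
  (isMultiplicative_squarefreeProdPrimeFactors w).map_one ▸
    hsum.le_tsum 1 fun n _ => squarefreeProdPrimeFactors_nonneg hw n

end Nonneg

theorem hasProd_mulIndicator_primes_one_add {R : Type*} [NormedCommRing R] [CompleteSpace R]
    {w : ℕ → R} (hsum : Summable (‖squarefreeProdPrimeFactors w ·‖)) :
    HasProd ({p | p.Prime}.mulIndicator (1 + w ·)) (∑' n, squarefreeProdPrimeFactors w n) := by
  have hmul := isMultiplicative_squarefreeProdPrimeFactors w
  have hfactor : Set.EqOn (fun p => ∑' e, squarefreeProdPrimeFactors w (p ^ e)) (1 + w ·)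
      {p | p.Prime} := fun p (hp : p.Prime) => by
    dsimp only
    rw [tsum_eq_sum (s := {0, 1}) fun e he =>
      squarefreeProdPrimeFactors_apply_prime_pow_of_two_le w hp (by simp at he; omega)]
    exact sum_squarefreeProdPrimeFactors_prime_pow w hp le_rfl
  rw [← Set.mulIndicator_congr hfactor]
  exact EulerProduct.eulerProduct_hasProd_mulIndicator hmul.1 hmul.2 hsum
    (squarefreeProdPrimeFactors w).map_zero

theorem tendsto_mean_sum_Ioc_mul_zeta {f : ArithmeticFunction ℝ}
    (hf : Summable fun d => ‖f d‖ / d) :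
    Tendsto (fun N : ℕ => (1 / (N : ℝ)) * ∑ n ∈ Ioc 0 N, (f * (ζ : ArithmeticFunction ℝ)) n)
      atTop (𝓝 (∑' d, f d / d)) := by
  have hmean : ∀ N : ℕ, (1 / (N : ℝ)) * ∑ n ∈ Ioc 0 N, (f * (ζ : ArithmeticFunction ℝ)) n
      = ∑' d, f d * (((N / d : ℕ) : ℝ) / N) := by
    intro N
    rw [sum_Ioc_mul_zeta_eq_sum, mul_sum, tsum_eq_sum (s := Ioc 0 N)]
    · exact sum_congr rfl fun d _ => by ring
    · intro d hd
      rw [Nat.div_eq_zero_iff.mpr (by simp at hd; omega), Nat.cast_zero, zero_div, mul_zero]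
  refine (tendsto_tsum_of_dominated_convergence hf (fun d => ?_)
    (Eventually.of_forall fun N d => ?_)).congr fun N => (hmean N).symm
  · simpa only [mul_one_div] using (tendsto_natCast_div_div_self d).const_mul (f d)
  · calc ‖f d * (((N / d : ℕ) : ℝ) / N)‖ = ‖f d‖ * (((N / d : ℕ) : ℝ) / N) := by
          rw [norm_mul, Real.norm_of_nonneg (r := ((N / d : ℕ) : ℝ) / N) (by positivity)]
      _ ≤ ‖f d‖ * (1 / d) := mul_le_mul_of_nonneg_left (natCast_div_div_self_le N d) (norm_nonneg _)
      _ = ‖f d‖ / d := mul_one_div _ _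

end ArithmeticFunction

open ArithmeticFunction

noncomputable def hWeight (p : ℕ) : ℝ := if 2 < p then 1 / ((p : ℝ) - 2) else 0

theorem h_eq_prod_one_add_hWeight (n : ℕ) : h n = ∏ p ∈ n.primeFactors, (1 + hWeight p) := by
  rw [h, prod_filter]
  refine prod_congr rfl fun p _ => ?_
  unfold hWeight
  split_ifs with hp
  · have : (p : ℝ) - 2 ≠ 0 := by
      have : (2 : ℝ) < p := by exact_mod_cast hp
      linarith
    field_simp
    ring
  · rw [add_zero]

theorem h_eq_squarefreeProdPrimeFactors_mul_zeta {n : ℕ} (hn : n ≠ 0) :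
    h n = (squarefreeProdPrimeFactors hWeight * (ζ : ArithmeticFunction ℝ)) n := by
  rw [squarefreeProdPrimeFactors_mul_zeta, prodPrimeFactors_apply hn, h_eq_prod_one_add_hWeight]

theorem hWeight_nonneg (p : ℕ) : 0 ≤ hWeight p := by
  unfold hWeight
  split_ifs with hp
  · have : (2 : ℝ) < p := by exact_mod_cast hp
    exact one_div_nonneg.mpr (by linarith)
  · exact le_rfl

theorem hWeight_div_self_le (p : ℕ) : hWeight p / p ≤ 3 * (1 / (p : ℝ) ^ 2) := by
  unfold hWeight
  split_ifs with hp
  · have : (3 : ℝ) ≤ p := by exact_mod_cast hp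
    rw [div_div, mul_one_div, div_le_div_iff₀ (by nlinarith) (by positivity)]
    nlinarith
  · rw [zero_div]
    positivity

theorem hWeight_div_self_nonneg (p : ℕ) : 0 ≤ hWeight p / p :=
  div_nonneg (hWeight_nonneg p) p.cast_nonneg

theorem summable_squarefreeProdPrimeFactors_hWeight_div_self :
    Summable (squarefreeProdPrimeFactors fun p => hWeight p / p) :=
  summable_squarefreeProdPrimeFactors hWeight_div_self_nonneg
    (Summable.of_nonneg_of_le hWeight_div_self_nonneg hWeight_div_self_le
      ((Real.summable_one_div_nat_pow.mpr one_lt_two).mul_left 3))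

theorem one_add_one_div_mul_sub_two_inv {x : ℝ} (hx : 2 < x) :
    (1 + 1 / (x * (x - 2)))⁻¹ = 1 - 1 / (x - 1) ^ 2 := by
  have : x - 2 ≠ 0 := by linarith
  have : x - 1 ≠ 0 := by linarith
  have : x ≠ 0 := by linarith
  rw [show 1 + 1 / (x * (x - 2)) = (x - 1) ^ 2 / (x * (x - 2)) by field_simp; ring, inv_div]
  field_simp
  ring

theorem hasProd_one_add_one_div_mul_sub_two :
    HasProd (fun p : {p : ℕ // p.Prime ∧ 2 < p} => 1 + 1 / (((p : ℕ) : ℝ) * (((p : ℕ) : ℝ) - 2)))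
      (∑' n, squarefreeProdPrimeFactors (fun p => hWeight p / p) n) := by
  have heuler := hasProd_mulIndicator_primes_one_add
    summable_squarefreeProdPrimeFactors_hWeight_div_self.norm
  have hodd : {p | p.Prime}.mulIndicator (fun p => 1 + hWeight p / p)
      = {p | p.Prime ∧ 2 < p}.mulIndicator (fun p => 1 + hWeight p / p) := by
    funext p
    simp only [Set.mulIndicator_apply, Set.mem_ofPred_eq]
    split_ifs <;> simp_all [hWeight]
  rw [hodd, ← hasProd_subtype_iff_mulIndicator] at heuler
  have hfactor : (fun p : {p : ℕ // p.Prime ∧ 2 < p} =>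
      1 + 1 / (((p : ℕ) : ℝ) * (((p : ℕ) : ℝ) - 2))) = (fun p => 1 + hWeight p / p) ∘ (↑) :=
    funext fun p => by rw [Function.comp_apply, hWeight, if_pos p.2.2, div_div, mul_comm]
  rw [hfactor]
  exact heuler

theorem tendsto_mean_h :
    Tendsto (fun x : ℕ => (1 / (x : ℝ)) * ∑ n ∈ Finset.Icc 1 x, h n) atTop
      (𝓝 (∑' n, squarefreeProdPrimeFactors (fun p => hWeight p / p) n)) := by
  have hsum : Summable fun d => ‖squarefreeProdPrimeFactors hWeight d‖ / d := by
    simpa only [Real.norm_of_nonneg (squarefreeProdPrimeFactors_nonneg hWeight_nonneg _),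
      ← squarefreeProdPrimeFactors_div_natCast]
      using summable_squarefreeProdPrimeFactors_hWeight_div_self
  simp_rw [squarefreeProdPrimeFactors_div_natCast]
  refine (tendsto_mean_sum_Ioc_mul_zeta hsum).congr fun x => ?_
  rw [← Finset.Icc_add_one_left_eq_Ioc]
  exact congrArg _ (sum_congr rfl fun n hn =>
    (h_eq_squarefreeProdPrimeFactors_mul_zeta (by simp at hn; omega)).symm)

/-- The mean value of `h` exists and equals
`∏_{p prime, p > 2} (1 + 1/(p(p-2))) = 1/C₂`. -/
theorem h_mean_value :
    Tendsto (fun x : ℕ => (1 / (x : ℝ)) * ∑ n ∈ Finset.Icc 1 x, h n) atTop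
      (𝓝 (∏' p : {p : ℕ // p.Prime ∧ 2 < p},
        (1 + 1 / (((p : ℕ) : ℝ) * (((p : ℕ) : ℝ) - 2))))) ∧
    (∏' p : {p : ℕ // p.Prime ∧ 2 < p},
        (1 + 1 / (((p : ℕ) : ℝ) * (((p : ℕ) : ℝ) - 2)))) = 1 / C2 := by
  have hprod := hasProd_one_add_one_div_mul_sub_two
  have hS : ∑' n, squarefreeProdPrimeFactors (fun p => hWeight p / p) n ≠ 0 :=
    (zero_lt_one.trans_le (one_le_tsum_squarefreeProdPrimeFactors hWeight_div_self_nonneg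
      summable_squarefreeProdPrimeFactors_hWeight_div_self)).ne'
  have hC2 : C2 = (∑' n, squarefreeProdPrimeFactors (fun p => hWeight p / p) n)⁻¹ := by
    rw [C2, ← (hprod.inv₀ hS).tprod_eq]
    exact tprod_congr fun p => (one_add_one_div_mul_sub_two_inv (by exact_mod_cast p.2.2)).symm
  rw [hprod.tprod_eq, hC2, one_div, inv_inv]
  exact ⟨tendsto_mean_h, rfl⟩
end

section
/- For every positive integer k, the k-th moment of h exists and is given by the convergent product: lim_{x→∞} (1/x) ∑_{n≤x} h(n)^k = ∏_{p prime, p>2} (1 − 1/p + ((p−1)/(p−2))^k / p). -/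
/-!
Since `h n ^ k = ∏_{p ∣ n} h p ^ k` depends only on the prime divisors of `n`, we have
`h ^ k = 1 ∗ g` with `g` supported on squarefree numbers and `g d = ∏_{p ∣ d} (h p ^ k - 1)`;
as `h 2 = 1`, only odd `d` contribute. Since `h p ^ k - 1 = O(1/p)`, the terms
`(h p ^ k - 1) / p` are summable over primes, so grouping `d` by its set of prime factors shows
that `∑ g d / d` converges absolutely to `∏_{p > 2} (1 + (h p ^ k - 1) / p)`, the claimed product.
Finally `(1/x) ∑_{n ≤ x} h n ^ k = ∑_d (g d / d) · (d ⌊x/d⌋ / x)`, and dominated convergence gives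
the limit `∑ g d / d`.
-/

open Filter Topology

open Finset

section SquarefreeCoeff

variable {R : Type*} [CommRing R]

def squarefreeCoeff (F : ℕ → R) (d : ℕ) : R :=
  if Squarefree d then ∏ p ∈ d.primeFactors, (F p - 1) else 0

theorem prod_primeFactors_eq_sum_divisors_squarefreeCoeff (F : ℕ → R) {n : ℕ} (hn : n ≠ 0) :
    ∏ p ∈ n.primeFactors, F p = ∑ d ∈ n.divisors, squarefreeCoeff F d := by
  simp only [squarefreeCoeff]
  rw [← sum_filter, Nat.sum_divisors_filter_squarefree hn, Nat.factors_eq, List.toFinset_coe,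
    Nat.toFinset_factors]
  calc ∏ p ∈ n.primeFactors, F p = ∏ p ∈ n.primeFactors, (1 + (F p - 1)) :=
        prod_congr rfl fun p _ => (add_sub_cancel 1 (F p)).symm
    _ = _ := prod_one_add _
    _ = _ := sum_congr rfl fun t ht => by
      rw [prod_val, Function.id_def, Nat.primeFactors_prod fun p hp =>
        Nat.prime_of_mem_primeFactors (mem_powerset.1 ht hp)]

end SquarefreeCoeff

section EulerProduct

variable {P : ℕ → Prop} (hP : ∀ p, P p → p.Prime)
include hP

theorem primeFactors_prod_subtype (s : Finset (Subtype P)) :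
    (∏ p ∈ s, (p : ℕ)).primeFactors = s.map (Function.Embedding.subtype P) := by
  have := Nat.primeFactors_prod (s := s.map (Function.Embedding.subtype P)) fun p hp => by
    obtain ⟨q, -, rfl⟩ := mem_map.1 hp
    exact hP _ q.2
  rwa [prod_map] at this

theorem squarefree_prod_subtype (s : Finset (Subtype P)) : Squarefree (∏ p ∈ s, (p : ℕ)) :=
  Finset.squarefree_prod_of_pairwise_isCoprime
    (fun p _ q _ hpq => Nat.coprime_iff_isRelPrime.1 <|
      (Nat.coprime_primes (hP _ p.2) (hP _ q.2)).2 (Subtype.coe_injective.ne hpq))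
    fun p _ => (hP _ p.2).squarefree

variable {𝕜 : Type*} [NormedField 𝕜] [CompleteSpace 𝕜] {F : ℕ → 𝕜}

theorem hasSum_squarefreeCoeff_div (hF₁ : ∀ p, p.Prime → ¬ P p → F p = 1)
    (hF : Summable fun p : Subtype P => ‖(F p - 1) / p‖) :
    HasSum (fun d : ℕ => squarefreeCoeff F d / d)
      (∑' s : Finset (Subtype P), ∏ p ∈ s, (F p - 1) / p) := by
  classical
  have hinj : Function.Injective fun s : Finset (Subtype P) => ∏ p ∈ s, (p : ℕ) := fun s t hst =>
    map_injective _ <| by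
      rw [← primeFactors_prod_subtype hP, ← primeFactors_prod_subtype hP]
      exact congrArg Nat.primeFactors hst
  have hcomp : ∀ s : Finset (Subtype P),
      squarefreeCoeff F (∏ p ∈ s, (p : ℕ)) / (∏ p ∈ s, (p : ℕ) : ℕ) = ∏ p ∈ s, (F p - 1) / p := by
    intro s
    rw [squarefreeCoeff, if_pos (squarefree_prod_subtype hP s), primeFactors_prod_subtype hP,
      prod_map, Nat.cast_prod, ← prod_div_distrib]
    rfl
  have hsupp : ∀ d ∉ Set.range fun s : Finset (Subtype P) => ∏ p ∈ s, (p : ℕ),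
      squarefreeCoeff F d / d = 0 := by
    intro d hd
    rw [squarefreeCoeff, ite_div, zero_div, ite_eq_right_iff]
    intro hsq
    by_cases hPd : ∀ p ∈ d.primeFactors, P p
    · refine absurd ⟨d.primeFactors.subtype P, ?_⟩ hd
      dsimp only
      rw [prod_subtype_eq_prod_filter (fun p => p), filter_true_of_mem hPd,
        Nat.prod_primeFactors_of_squarefree hsq]
    · push Not at hPd
      obtain ⟨p, hp, hPp⟩ := hPd
      rw [prod_eq_zero hp (by rw [hF₁ p (Nat.prime_of_mem_primeFactors hp) hPp, sub_self]),
        zero_div]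
  rw [← hinj.hasSum_iff hsupp]
  convert (summable_finsetProd_of_summable_norm hF).hasSum using 1
  exact funext hcomp

theorem hasProd_one_add_sub_one_div (hF₁ : ∀ p, p.Prime → ¬ P p → F p = 1)
    (hF : Summable fun p : Subtype P => ‖(F p - 1) / p‖) :
    HasProd (fun p : Subtype P => 1 + (F p - 1) / p) (∑' d, squarefreeCoeff F d / d) := by
  rw [(hasSum_squarefreeCoeff_div hP hF₁ hF).tsum_eq]
  exact hasProd_one_add_of_hasSum_prod (summable_finsetProd_of_summable_norm hF).hasSum

end EulerProduct

theorem sum_Icc_sum_divisors {M : Type*} [AddCommMonoid M] (g : ℕ → M) (x : ℕ) :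
    ∑ n ∈ Icc 1 x, ∑ d ∈ n.divisors, g d = ∑ d ∈ Icc 1 x, (x / d) • g d := by
  rw [sum_comm' (t' := Icc 1 x) (s' := fun d => {n ∈ Ioc 0 x | d ∣ n})]
  · simp only [sum_const, Nat.Ioc_filter_dvd_card_eq_div]
  · intro n d
    simp only [mem_Icc, Nat.mem_divisors, mem_filter, mem_Ioc]
    constructor
    · rintro ⟨hn, hdn, -⟩
      exact ⟨⟨⟨hn.1, hn.2⟩, hdn⟩, Nat.pos_of_dvd_of_pos hdn hn.1,
        (Nat.le_of_dvd hn.1 hdn).trans hn.2⟩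
    · rintro ⟨⟨hn, hdn⟩, -⟩
      exact ⟨⟨hn.1, hn.2⟩, hdn, hn.1.ne'⟩

theorem tendsto_natCast_div_div_atTop (d : ℕ) :
    Tendsto (fun x : ℕ => ((x / d : ℕ) : ℝ) / x) atTop (𝓝 (1 / d)) := by
  rcases d.eq_zero_or_pos with rfl | hd
  · simp
  have hy : Tendsto (fun x : ℕ => (x : ℝ) / d) atTop atTop :=
    tendsto_natCast_atTop_atTop.atTop_div_const (by positivity)
  have := (tendsto_nat_floor_div_atTop.comp hy).mul_const (1 / (d : ℝ))
  rw [one_mul] at this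
  refine this.congr' ((eventually_ne_atTop 0).mono fun x hx => ?_)
  simp only [Function.comp_apply, Nat.floor_div_eq_div]
  field_simp

theorem natCast_div_div_le (x d : ℕ) : ((x / d : ℕ) : ℝ) / x ≤ 1 / d := by
  rcases x.eq_zero_or_pos with rfl | hx
  · simp
  calc ((x / d : ℕ) : ℝ) / x ≤ (x / d : ℝ) / x := by gcongr; exact Nat.cast_div_le
    _ = 1 / d := by rw [div_right_comm, div_self (by positivity)]

theorem tendsto_mean_sum_divisors {g : ℕ → ℝ} (hg : Summable fun d => g d / d) :
    Tendsto (fun x : ℕ => (1 / (x : ℝ)) * ∑ n ∈ Icc 1 x, ∑ d ∈ n.divisors, g d) atTop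
      (𝓝 (∑' d, g d / d)) := by
  have hmean : ∀ x : ℕ, (1 / (x : ℝ)) * ∑ n ∈ Icc 1 x, ∑ d ∈ n.divisors, g d =
      ∑' d, g d * (((x / d : ℕ) : ℝ) / x) := by
    intro x
    rw [sum_Icc_sum_divisors, tsum_eq_sum (s := Icc 1 x), mul_sum]
    · refine sum_congr rfl fun d _ => ?_
      rw [nsmul_eq_mul]
      ring
    · intro d hd
      rw [mem_Icc, not_and_or, not_le, not_le, Nat.lt_one_iff] at hd
      rcases hd with rfl | hd
      · simp
      · simp [Nat.div_eq_of_lt hd]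
  simp only [hmean]
  refine tendsto_tsum_of_dominated_convergence hg.abs (fun d => ?_)
    (Eventually.of_forall fun x d => ?_)
  · simpa only [← div_eq_mul_one_div] using (tendsto_natCast_div_div_atTop d).const_mul (g d)
  · rw [norm_mul, Real.norm_eq_abs, abs_div, div_eq_mul_one_div |g d|, Nat.abs_cast,
      Real.norm_of_nonneg (by positivity)]
    exact mul_le_mul_of_nonneg_left (natCast_div_div_le x d) (abs_nonneg _)

theorem h_prime {p : ℕ} (hp : p.Prime) :
    h p = if 2 < p then ((p : ℝ) - 1) / ((p : ℝ) - 2) else 1 := by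
  rw [h, hp.primeFactors, filter_singleton]
  split_ifs <;> simp

theorem h_eq_prod_primeFactors (n : ℕ) : h n = ∏ p ∈ n.primeFactors, h p := by
  rw [h, prod_filter]
  exact prod_congr rfl fun p hp => (h_prime (Nat.prime_of_mem_primeFactors hp)).symm

theorem abs_h_pow_sub_one_le (k : ℕ) {p : ℕ} (hp : p.Prime) :
    |h p ^ k - 1| ≤ 3 * k * 2 ^ k / p := by
  rw [h_prime hp]
  split_ifs with h2p
  · have hp3 : (3 : ℝ) ≤ p := by exact_mod_cast h2p
    set r : ℝ := ((p : ℝ) - 1) / ((p : ℝ) - 2)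
    have hr : r - 1 = 1 / ((p : ℝ) - 2) := by
      rw [div_sub_one (by linarith)]
      ring
    have hr2 : r ≤ 2 := by
      rw [div_le_iff₀ (by linarith)]
      linarith
    have hr1 : 0 ≤ r - 1 := by
      rw [hr]
      exact div_nonneg zero_le_one (by linarith)
    calc |r ^ k - 1| = |r ^ k - 1 ^ k| := by rw [one_pow]
      _ ≤ |r - 1| * k * max |r| |1| ^ (k - 1) := abs_pow_sub_pow_le ..
      _ ≤ 3 / p * k * 2 ^ k := by
        gcongr
        · rw [abs_of_nonneg hr1, hr, div_le_div_iff₀ (by linarith) (by linarith)]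
          linarith
        · calc max |r| |1| ^ (k - 1) ≤ 2 ^ (k - 1) := by
                gcongr
                rw [max_le_iff, abs_of_nonneg (by linarith), abs_one]
                exact ⟨hr2, one_le_two⟩
            _ ≤ 2 ^ k := pow_le_pow_right₀ one_le_two (Nat.sub_le k 1)
      _ = 3 * k * 2 ^ k / p := by ring
  · simp only [one_pow, sub_self, abs_zero]
    positivity

theorem summable_norm_h_pow_sub_one_div (k : ℕ) :
    Summable fun p : {p : ℕ // p.Prime ∧ 2 < p} => ‖(h p ^ k - 1) / p‖ := by
  have hsum : Summable fun n : ℕ => 3 * k * 2 ^ k * (1 / (n : ℝ) ^ 2) :=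
    (Real.summable_one_div_nat_pow.2 one_lt_two).mul_left _
  refine (hsum.comp_injective Subtype.val_injective).of_nonneg_of_le (fun _ => norm_nonneg _)
    fun ⟨p, hp, _⟩ => ?_
  have hp0 : (0 : ℝ) < p := by exact_mod_cast hp.pos
  calc ‖(h p ^ k - 1) / p‖ = |h p ^ k - 1| / p := by rw [Real.norm_eq_abs, abs_div, Nat.abs_cast]
    _ ≤ 3 * k * 2 ^ k / p / p := by gcongr; exact abs_h_pow_sub_one_le k hp
    _ = 3 * k * 2 ^ k * (1 / (p : ℝ) ^ 2) := by ring

theorem h_kth_moment_general (k : ℕ) :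
    Multipliable (fun p : {p : ℕ // p.Prime ∧ 2 < p} =>
      1 - 1 / ((p : ℕ) : ℝ) +
        ((((p : ℕ) : ℝ) - 1) / (((p : ℕ) : ℝ) - 2)) ^ k / ((p : ℕ) : ℝ)) ∧
    Tendsto (fun x : ℕ => (1 / (x : ℝ)) * ∑ n ∈ Finset.Icc 1 x, (h n) ^ k) atTop
      (𝓝 (∏' p : {p : ℕ // p.Prime ∧ 2 < p},
        (1 - 1 / ((p : ℕ) : ℝ) +
          ((((p : ℕ) : ℝ) - 1) / (((p : ℕ) : ℝ) - 2)) ^ k / ((p : ℕ) : ℝ)))) := by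
  have hP : ∀ p, p.Prime ∧ 2 < p → p.Prime := fun p hp => hp.1
  have hF₁ : ∀ p, p.Prime → ¬ (p.Prime ∧ 2 < p) → h p ^ k = 1 := fun p hp hp2 => by
    rw [h_prime hp, if_neg fun h2p => hp2 ⟨hp, h2p⟩, one_pow]
  have hF := summable_norm_h_pow_sub_one_div k
  have hprod := hasProd_one_add_sub_one_div hP hF₁ hF
  have hfactor : (fun p : {p : ℕ // p.Prime ∧ 2 < p} => 1 + (h p ^ k - 1) / p) =
      fun p : {p : ℕ // p.Prime ∧ 2 < p} => 1 - 1 / ((p : ℕ) : ℝ) +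
        ((((p : ℕ) : ℝ) - 1) / (((p : ℕ) : ℝ) - 2)) ^ k / ((p : ℕ) : ℝ) := by
    ext ⟨p, hp, h2p⟩
    rw [h_prime hp, if_pos h2p]
    ring
  rw [hfactor] at hprod
  refine ⟨hprod.multipliable, ?_⟩
  rw [hprod.tprod_eq]
  refine (tendsto_mean_sum_divisors (hasSum_squarefreeCoeff_div hP hF₁ hF).summable).congr
    fun x => congrArg _ (sum_congr rfl fun n hn => ?_)
  rw [h_eq_prod_primeFactors, ← prod_pow, prod_primeFactors_eq_sum_divisors_squarefreeCoeff _
    (Nat.one_le_iff_ne_zero.1 (mem_Icc.1 hn).1)]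

/-- For every `k ≥ 1`, the `k`-th moment of `h` exists and is given by the convergent
product `∏_{p prime, p > 2} (1 - 1/p + ((p-1)/(p-2))^k / p)`. -/
theorem h_kth_moment (k : ℕ) (hk : 0 < k) :
    Multipliable (fun p : {p : ℕ // p.Prime ∧ 2 < p} =>
      1 - 1 / ((p : ℕ) : ℝ) +
        ((((p : ℕ) : ℝ) - 1) / (((p : ℕ) : ℝ) - 2)) ^ k / ((p : ℕ) : ℝ)) ∧
    Tendsto (fun x : ℕ => (1 / (x : ℝ)) * ∑ n ∈ Finset.Icc 1 x, (h n) ^ k) atTop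
      (𝓝 (∏' p : {p : ℕ // p.Prime ∧ 2 < p},
        (1 - 1 / ((p : ℕ) : ℝ) +
          ((((p : ℕ) : ℝ) - 1) / (((p : ℕ) : ℝ) - 2)) ^ k / ((p : ℕ) : ℝ)))) :=
  h_kth_moment_general k
end

section
/- The additive function f(n) = ln h(n) possesses a limiting distribution: there exists a nondecreasing, right-continuous function F : ℝ → [0,1] with F(t) → 0 as t → −∞ and F(t) → 1 as t → +∞, such that for every point t at which F is continuous, (1/x)·#{n ≤ x : ln h(n) ≤ t} → F(t) as x → ∞. -/
open Filter Topology
open scoped Classical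

/-!
Write `f n = ∑_{p ∣ n} w p` with `w p = log ((p - 1) / (p - 2)) ≥ 0` for odd `p`, so that
`∑ w p / p < ∞`. Truncating to the primes `p ≤ y` gives a function `f_y ≤ f` that is periodic
modulo the primorial `y#`, so its asymptotic distribution `F_y` is read off one period; `F_y`
decreases in `y`, and `F = inf_y F_y`. On average over `n ≤ x`, `f - f_y` is at most
`∑_{p > y} w p / p`, so by Markov's inequality `f` and `f_y` differ by more than `δ` only on a
set of small upper density, which sandwiches the distribution of `f` at continuity points of
`F`. Each `F_y` is a step function, whence right-continuity of `F`; Markov's inequality also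
gives `F_y t ≥ 1 - (∑ w p / p) / t`, whence `F → 1`.
-/

open Finset Function

def HasLimitingDistribution (f : ℕ → ℝ) : Prop :=
  ∃ F : ℝ → ℝ,
    Monotone F ∧
    (∀ t : ℝ, ContinuousWithinAt F (Set.Ici t) t) ∧
    (∀ t : ℝ, 0 ≤ F t ∧ F t ≤ 1) ∧
    Tendsto F atBot (𝓝 0) ∧
    Tendsto F atTop (𝓝 1) ∧
    ∀ t : ℝ, ContinuousAt F t →
      Tendsto (fun x : ℕ => (#{n ∈ Icc 1 x | f n ≤ t} : ℝ) / x) atTop (𝓝 (F t))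

theorem Function.Periodic.card_filter_Icc_mul {S : ℕ → Prop} [DecidablePred S] {P : ℕ}
    (hS : Periodic S P) (k : ℕ) :
    #{n ∈ Icc 1 (k * P) | S n} = k * #{n ∈ Icc 1 P | S n} := by
  have hblock : ∀ m, #{n ∈ Ico m (m + P) | S n} = #{n ∈ Icc 1 P | S n} := fun m => by
    rw [Nat.filter_Ico_card_eq_of_periodic _ _ _ hS,
      ← Nat.filter_Ico_card_eq_of_periodic 1 _ _ hS, add_comm, Ico_add_one_right_eq_Icc]
  induction k with
  | zero => simp
  | succ k ih =>
    rw [← Ico_add_one_right_eq_Icc, ← Ico_union_Ico_eq_Ico (b := k * P + 1) (by lia) (by lia),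
      filter_union, card_union_of_disjoint
        (disjoint_filter_filter (Ico_disjoint_Ico_consecutive _ _ _)),
      Ico_add_one_right_eq_Icc, ih, show (k + 1) * P + 1 = k * P + 1 + P by ring, hblock]
    ring

theorem Function.Periodic.tendsto_card_filter_Icc_div {S : ℕ → Prop} [DecidablePred S] {P : ℕ}
    (hS : Periodic S P) (hP : 0 < P) :
    Tendsto (fun x : ℕ => (#{n ∈ Icc 1 x | S n} : ℝ) / x) atTop
      (𝓝 ((#{n ∈ Icc 1 P | S n} : ℝ) / P)) := by
  set c := #{n ∈ Icc 1 P | S n}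
  have hcount : ∀ x : ℕ, |(#{n ∈ Icc 1 x | S n} : ℝ) - x * (c / P)| ≤ c := by
    intro x
    set k := x / P
    have hxk : k * P ≤ x ∧ x < (k + 1) * P := by
      rw [add_mul, one_mul]; exact ⟨Nat.div_mul_le_self x P, Nat.lt_div_mul_add hP⟩
    have hlow : (k * c : ℝ) ≤ #{n ∈ Icc 1 x | S n} := by
      rw [← Nat.cast_mul, Nat.cast_le, ← hS.card_filter_Icc_mul]
      exact card_le_card (filter_subset_filter _ (Icc_subset_Icc_right hxk.1))
    have hhigh : (#{n ∈ Icc 1 x | S n} : ℝ) ≤ (k + 1) * c := by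
      rw [← Nat.cast_succ, ← Nat.cast_mul, Nat.cast_le, ← hS.card_filter_Icc_mul]
      exact card_le_card (filter_subset_filter _ (Icc_subset_Icc_right hxk.2.le))
    have hPR : (0 : ℝ) < P := by exact_mod_cast hP
    have hxkR : (k * P : ℝ) ≤ x ∧ (x : ℝ) ≤ (k + 1) * P := by
      constructor <;> [exact_mod_cast hxk.1; exact_mod_cast hxk.2.le]
    have hmid : (k * c : ℝ) ≤ x * (c / P) ∧ (x * (c / P) : ℝ) ≤ (k + 1) * c := by
      rw [← mul_div_assoc, le_div_iff₀ hPR, div_le_iff₀ hPR]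
      constructor <;> nlinarith [Nat.cast_nonneg (α := ℝ) c]
    rw [abs_le]
    constructor <;> linarith
  rw [tendsto_iff_norm_sub_tendsto_zero]
  refine squeeze_zero' (Eventually.of_forall fun x => norm_nonneg _) ?_
    (tendsto_const_div_atTop_nhds_zero_nat (c : ℝ))
  filter_upwards [eventually_gt_atTop 0] with x hx
  have hxR : (0 : ℝ) < x := by exact_mod_cast hx
  rw [Real.norm_eq_abs, ← mul_div_cancel_left₀ ((c : ℝ) / P) hxR.ne', ← sub_div, abs_div,
    abs_of_pos hxR]
  exact div_le_div_of_nonneg_right (hcount x) hxR.le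

theorem Finset.card_filter_lt_mul_le_sum {ι : Type*} (s : Finset ι) {r : ι → ℝ}
    (hr : ∀ i ∈ s, 0 ≤ r i) (ε : ℝ) : (#{i ∈ s | ε < r i} : ℝ) * ε ≤ ∑ i ∈ s, r i :=
  calc (#{i ∈ s | ε < r i} : ℝ) * ε = ∑ i ∈ s with ε < r i, ε := by
        rw [sum_const, nsmul_eq_mul]
    _ ≤ ∑ i ∈ s with ε < r i, r i := sum_le_sum fun i hi => (mem_filter.1 hi).2.le
    _ ≤ ∑ i ∈ s, r i :=
        sum_le_sum_of_subset_of_nonneg (filter_subset _ _) fun i hi _ => hr i hi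

theorem Finset.eventually_card_filter_le_eq {ι : Type*} (s : Finset ι) (r : ι → ℝ) (t : ℝ) :
    ∀ᶠ u in 𝓝[≥] t, #{i ∈ s | r i ≤ u} = #{i ∈ s | r i ≤ t} := by
  have hiff : ∀ᶠ u in 𝓝[≥] t, ∀ i ∈ s, (r i ≤ u ↔ r i ≤ t) := by
    refine (eventually_all_finset s).2 fun i _ => ?_
    rcases le_or_gt (r i) t with hi | hi
    · filter_upwards [self_mem_nhdsWithin] with u hu using iff_of_true (hi.trans hu) hi
    · filter_upwards [Ico_mem_nhdsGE hi] with u hu using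
        iff_of_false (not_le.2 hu.2) (not_le.2 hi)
  filter_upwards [hiff] with u hu
  rw [filter_congr hu]

theorem Finset.card_filter_le_le_card_filter_le_add {ι : Type*} {f v : ι → ℝ} (s : Finset ι)
    {u t : ℝ} :
    #{n ∈ s | v n ≤ u} ≤ #{n ∈ s | f n ≤ t} + #{n ∈ s | t - u < f n - v n} := by
  refine (card_le_card fun n hn => ?_).trans (card_union_le _ _)
  rw [mem_filter] at hn
  rw [mem_union, mem_filter, mem_filter]
  by_cases hf : f n ≤ t
  · exact Or.inl ⟨hn.1, hf⟩
  · exact Or.inr ⟨hn.1, by linarith [not_le.1 hf, hn.2]⟩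

theorem tendsto_card_filter_le_div_of_approx {f : ℕ → ℝ} {v : ℕ → ℕ → ℝ} {G : ℕ → ℝ → ℝ}
    {F : ℝ → ℝ} (hvf : ∀ y n, 1 ≤ n → v y n ≤ f n)
    (hvG : ∀ y u,
      Tendsto (fun x : ℕ => (#{n ∈ Icc 1 x | v y n ≤ u} : ℝ) / x) atTop (𝓝 (G y u)))
    (hGF : ∀ u, Tendsto (fun y => G y u) atTop (𝓝 (F u)))
    (hfv : ∀ δ > 0, ∀ ε > 0, ∀ᶠ y in atTop, ∀ x : ℕ,
      (#{n ∈ Icc 1 x | δ < f n - v y n} : ℝ) ≤ ε * x)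
    {t : ℝ} (hFt : ContinuousAt F t) :
    Tendsto (fun x : ℕ => (#{n ∈ Icc 1 x | f n ≤ t} : ℝ) / x) atTop (𝓝 (F t)) := by
  refine tendsto_order.2 ⟨fun a ha => ?_, fun b hb => ?_⟩
  · -- `f n ≤ t` as soon as `v y n ≤ s` and `f n - v y n ≤ t - s`; continuity of `F` at `t`
    -- makes the loss from `t` to `s < t` small.
    set ε := (F t - a) / 4 with hε
    obtain ⟨s, hst, hs⟩ :=
      (hFt.eventually (lt_mem_nhds (show F t - ε < F t by linarith))).exists_lt
    obtain ⟨y, hGy, hy⟩ :=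
      ((hGF s).eventually (lt_mem_nhds (show F s - ε < F s by linarith))).and
        (hfv (t - s) (by linarith) ε (by linarith)) |>.exists
    filter_upwards [(hvG y s).eventually (lt_mem_nhds (show G y s - ε < G y s by linarith)),
      eventually_gt_atTop 0] with x hx hx0
    have hxR : (0 : ℝ) < x := by exact_mod_cast hx0
    have hsplit : (#{n ∈ Icc 1 x | v y n ≤ s} : ℝ) / x
        ≤ (#{n ∈ Icc 1 x | f n ≤ t} : ℝ) / x + ε := by
      have hcard : (#{n ∈ Icc 1 x | v y n ≤ s} : ℝ)
          ≤ #{n ∈ Icc 1 x | f n ≤ t} + #{n ∈ Icc 1 x | t - s < f n - v y n} := by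
        exact_mod_cast card_filter_le_le_card_filter_le_add (Icc 1 x)
      rw [div_le_iff₀ hxR, add_mul, div_mul_cancel₀ _ hxR.ne']
      linarith [hy x]
    linarith
  · obtain ⟨y, hy⟩ := ((hGF t).eventually (gt_mem_nhds hb)).exists
    filter_upwards [(hvG y t).eventually (gt_mem_nhds hy)] with x hx
    refine lt_of_le_of_lt (div_le_div_of_nonneg_right ?_ (Nat.cast_nonneg x)) hx
    exact_mod_cast card_le_card fun n hn => by
      rw [mem_filter, mem_Icc] at hn ⊢
      exact ⟨hn.1, (hvf y n hn.1.1).trans hn.2⟩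

noncomputable def primeSum (w : ℕ → ℝ) (n : ℕ) : ℝ := ∑ p ∈ n.primeFactors, w p

-- Unlike `primeSum w`, this does not vanish at `n = 0`, which keeps it periodic modulo
-- `primorial y`.
noncomputable def truncPrimeSum (w : ℕ → ℝ) (y n : ℕ) : ℝ :=
  ∑ p ∈ (y + 1).primesBelow with p ∣ n, w p

noncomputable def truncDistrib (w : ℕ → ℝ) (y : ℕ) (t : ℝ) : ℝ :=
  (#{n ∈ Icc 1 (primorial y) | truncPrimeSum w y n ≤ t} : ℝ) / primorial y

noncomputable def limitDistrib (w : ℕ → ℝ) (t : ℝ) : ℝ := ⨅ y, truncDistrib w y t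

theorem sum_Icc_sum_filter_dvd_le {w : ℕ → ℝ} (B : Finset ℕ) (hw : ∀ p ∈ B, 0 ≤ w p) (x : ℕ) :
    ∑ n ∈ Icc 1 x, ∑ p ∈ B with p ∣ n, w p ≤ x * ∑ p ∈ B, w p / p := by
  simp_rw [sum_filter]
  rw [sum_comm, mul_sum]
  refine sum_le_sum fun p hp => ?_
  rw [← sum_filter, sum_const, nsmul_eq_mul,
    show Icc 1 x = Ioc 0 x from Icc_add_one_left_eq_Ioc 0 x, Nat.Ioc_filter_dvd_card_eq_div,
    mul_comm, mul_div_assoc', mul_comm (x : ℝ), mul_div_assoc]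
  exact mul_le_mul_of_nonneg_left Nat.cast_div_le (hw p hp)

theorem periodic_truncPrimeSum (w : ℕ → ℝ) (y : ℕ) :
    Periodic (truncPrimeSum w y) (primorial y) := by
  intro n
  refine sum_congr (filter_congr fun p hp => ?_) fun _ _ => rfl
  have hp' := Nat.mem_primesBelow.1 hp
  exact Nat.dvd_add_left ((hp'.2.dvd_primorial_iff).2 (by lia))

theorem truncPrimeSum_nonneg {w : ℕ → ℝ} (hw : ∀ p, 0 ≤ w p) (y n : ℕ) :
    0 ≤ truncPrimeSum w y n :=
  sum_nonneg fun p _ => hw p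

theorem truncPrimeSum_mono {w : ℕ → ℝ} (hw : ∀ p, 0 ≤ w p) (n : ℕ) :
    Monotone fun y => truncPrimeSum w y n :=
  fun _ _ hy => sum_le_sum_of_subset_of_nonneg
    (filter_subset_filter _ (filter_subset_filter _ (range_subset_range.2 (by lia))))
    fun p _ _ => hw p

theorem primeSum_eq_truncPrimeSum_add {w : ℕ → ℝ} {y x n : ℕ} (hn : n ∈ Icc 1 x) :
    primeSum w n = truncPrimeSum w y n + ∑ p ∈ {p ∈ Ioc y x | p.Prime} with p ∣ n, w p := by
  rw [primeSum, truncPrimeSum, ← sum_union]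
  · congr 1
    ext p
    simp only [Nat.mem_primeFactors, mem_union, mem_filter, Nat.mem_primesBelow, mem_Ioc,
      mem_Icc] at hn ⊢
    constructor
    · rintro ⟨hp, hpn, -⟩
      have := Nat.le_of_dvd (by lia) hpn
      by_cases hpy : p ≤ y
      · exact Or.inl ⟨⟨by lia, hp⟩, hpn⟩
      · exact Or.inr ⟨⟨⟨by lia, by lia⟩, hp⟩, hpn⟩
    · rintro (⟨⟨-, hp⟩, hpn⟩ | ⟨⟨-, hp⟩, hpn⟩) <;> exact ⟨hp, hpn, by lia⟩
  · refine disjoint_filter_filter (disjoint_left.2 fun p hp hp' => ?_)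
    simp only [Nat.mem_primesBelow, mem_filter, mem_Ioc] at hp hp'
    lia

theorem truncPrimeSum_le_primeSum {w : ℕ → ℝ} (hw : ∀ p, 0 ≤ w p) (y n : ℕ) (hn : 1 ≤ n) :
    truncPrimeSum w y n ≤ primeSum w n := by
  rw [primeSum_eq_truncPrimeSum_add (x := n) (mem_Icc.2 ⟨hn, le_rfl⟩)]
  exact le_add_of_nonneg_right (sum_nonneg fun p _ => hw p)

theorem card_filter_lt_primeSum_sub_truncPrimeSum_le {w : ℕ → ℝ} (hw : ∀ p, 0 ≤ w p)
    (y x : ℕ) (δ : ℝ) :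
    (#{n ∈ Icc 1 x | δ < primeSum w n - truncPrimeSum w y n} : ℝ) * δ
      ≤ x * ∑ p ∈ Ioc y x with p.Prime, w p / p := by
  have htail : ∀ n ∈ Icc 1 x, primeSum w n - truncPrimeSum w y n
      = ∑ p ∈ {p ∈ Ioc y x | p.Prime} with p ∣ n, w p := fun n hn => by
    rw [primeSum_eq_truncPrimeSum_add hn, add_sub_cancel_left]
  calc _ ≤ ∑ n ∈ Icc 1 x, (primeSum w n - truncPrimeSum w y n) :=
        card_filter_lt_mul_le_sum _ (fun n hn => (htail n hn).symm ▸ sum_nonneg fun p _ => hw p) δ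
    _ = ∑ n ∈ Icc 1 x, ∑ p ∈ {p ∈ Ioc y x | p.Prime} with p ∣ n, w p := sum_congr rfl htail
    _ ≤ _ := sum_Icc_sum_filter_dvd_le _ (fun p _ => hw p) x

theorem eventually_card_filter_lt_primeSum_sub_truncPrimeSum_le {w : ℕ → ℝ} (hw : ∀ p, 0 ≤ w p)
    (hsum : Summable fun p : ℕ => w p / p) {δ : ℝ} (hδ : 0 < δ) {ε : ℝ} (hε : 0 < ε) :
    ∀ᶠ y in atTop, ∀ x : ℕ,
      (#{n ∈ Icc 1 x | δ < primeSum w n - truncPrimeSum w y n} : ℝ) ≤ ε * x := by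
  obtain ⟨s, hs⟩ := hsum.vanishing (Iio_mem_nhds (mul_pos hε hδ))
  filter_upwards [eventually_ge_atTop (s.sup id)] with y hy x
  have htail : ∑ p ∈ Ioc y x with p.Prime, w p / p < ε * δ :=
    hs _ <| disjoint_left.2 fun p hp hps => by
      have := le_sup (f := id) hps
      simp only [mem_filter, mem_Ioc, id] at hp this
      lia
  rw [← mul_le_mul_iff_of_pos_right hδ]
  calc _ ≤ _ := card_filter_lt_primeSum_sub_truncPrimeSum_le hw y x δ
    _ ≤ x * (ε * δ) := mul_le_mul_of_nonneg_left htail.le (Nat.cast_nonneg x)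
    _ = ε * x * δ := by ring

theorem tendsto_truncDistrib (w : ℕ → ℝ) (y : ℕ) (u : ℝ) :
    Tendsto (fun x : ℕ => (#{n ∈ Icc 1 x | truncPrimeSum w y n ≤ u} : ℝ) / x) atTop
      (𝓝 (truncDistrib w y u)) :=
  ((periodic_truncPrimeSum w y).comp (· ≤ u)).tendsto_card_filter_Icc_div (primorial_pos y)

theorem truncDistrib_nonneg (w : ℕ → ℝ) (y : ℕ) (t : ℝ) : 0 ≤ truncDistrib w y t := by
  unfold truncDistrib; positivity

theorem truncDistrib_le_one (w : ℕ → ℝ) (y : ℕ) (t : ℝ) : truncDistrib w y t ≤ 1 := by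
  refine div_le_one_of_le₀ ?_ (Nat.cast_nonneg _)
  exact_mod_cast (card_filter_le _ _).trans (Nat.card_Icc 1 _).le

theorem truncDistrib_mono (w : ℕ → ℝ) (y : ℕ) : Monotone (truncDistrib w y) := fun _ _ hst =>
  div_le_div_of_nonneg_right
    (Nat.cast_le.2 (card_le_card (monotone_filter_right _ fun _ _ h => h.trans hst)))
    (Nat.cast_nonneg _)

theorem truncDistrib_antitone {w : ℕ → ℝ} (hw : ∀ p, 0 ≤ w p) (t : ℝ) :
    Antitone fun y => truncDistrib w y t :=
  fun _ _ hy => le_of_tendsto_of_tendsto' (tendsto_truncDistrib w _ t) (tendsto_truncDistrib w _ t)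
    fun _ => div_le_div_of_nonneg_right (Nat.cast_le.2 (card_le_card
      (monotone_filter_right _ fun n _ h => (truncPrimeSum_mono hw n hy).trans h)))
      (Nat.cast_nonneg _)

theorem truncDistrib_of_neg {w : ℕ → ℝ} (hw : ∀ p, 0 ≤ w p) (y : ℕ) {t : ℝ} (ht : t < 0) :
    truncDistrib w y t = 0 := by
  rw [truncDistrib,
    filter_false_of_mem fun n _ => not_le.2 (ht.trans_le (truncPrimeSum_nonneg hw y n))]
  simp

theorem one_sub_tsum_div_le_truncDistrib {w : ℕ → ℝ} (hw : ∀ p, 0 ≤ w p)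
    (hsum : Summable fun p : ℕ => w p / p) (y : ℕ) {t : ℝ} (ht : 0 < t) :
    1 - (∑' p : ℕ, w p / p) / t ≤ truncDistrib w y t := by
  set P := primorial y
  have hPR : (0 : ℝ) < P := by exact_mod_cast primorial_pos y
  have hsplit : (#{n ∈ Icc 1 P | truncPrimeSum w y n ≤ t} : ℝ)
      + #{n ∈ Icc 1 P | t < truncPrimeSum w y n} = P := by
    have := card_filter_add_card_filter_not (s := Icc 1 P) (p := fun n => truncPrimeSum w y n ≤ t)
    simp only [not_le, Nat.card_Icc, add_tsub_cancel_right] at this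
    exact_mod_cast this
  have hmarkov : (#{n ∈ Icc 1 P | t < truncPrimeSum w y n} : ℝ) * t ≤ P * ∑' p : ℕ, w p / p :=
    calc _ ≤ ∑ n ∈ Icc 1 P, truncPrimeSum w y n :=
          card_filter_lt_mul_le_sum _ (fun n _ => truncPrimeSum_nonneg hw y n) t
      _ ≤ P * ∑ p ∈ (y + 1).primesBelow, w p / p := sum_Icc_sum_filter_dvd_le _ (fun p _ => hw p) P
      _ ≤ P * ∑' p : ℕ, w p / p := mul_le_mul_of_nonneg_left
          (hsum.sum_le_tsum _ fun p _ => div_nonneg (hw p) (Nat.cast_nonneg p)) hPR.le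
  rw [truncDistrib, sub_le_iff_le_add, div_add_div _ _ hPR.ne' ht.ne', le_div_iff₀ (by positivity)]
  nlinarith

theorem eventually_truncDistrib_eq (w : ℕ → ℝ) (y : ℕ) (t : ℝ) :
    ∀ᶠ u in 𝓝[≥] t, truncDistrib w y u = truncDistrib w y t := by
  filter_upwards [eventually_card_filter_le_eq (Icc 1 (primorial y)) (truncPrimeSum w y) t]
    with u hu
  rw [truncDistrib, truncDistrib, hu]

theorem bddBelow_range_truncDistrib (w : ℕ → ℝ) (t : ℝ) :
    BddBelow (Set.range fun y => truncDistrib w y t) :=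
  ⟨0, Set.forall_mem_range.2 fun y => truncDistrib_nonneg w y t⟩

theorem limitDistrib_le_truncDistrib (w : ℕ → ℝ) (y : ℕ) (t : ℝ) :
    limitDistrib w t ≤ truncDistrib w y t :=
  ciInf_le (bddBelow_range_truncDistrib w t) y

theorem tendsto_limitDistrib {w : ℕ → ℝ} (hw : ∀ p, 0 ≤ w p) (t : ℝ) :
    Tendsto (fun y => truncDistrib w y t) atTop (𝓝 (limitDistrib w t)) :=
  tendsto_atTop_ciInf (truncDistrib_antitone hw t) (bddBelow_range_truncDistrib w t)

theorem limitDistrib_mono (w : ℕ → ℝ) : Monotone (limitDistrib w) := fun _ _ hst =>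
  le_ciInf fun y => (limitDistrib_le_truncDistrib w y _).trans (truncDistrib_mono w y hst)

theorem limitDistrib_nonneg (w : ℕ → ℝ) (t : ℝ) : 0 ≤ limitDistrib w t :=
  le_ciInf fun y => truncDistrib_nonneg w y t

theorem limitDistrib_le_one (w : ℕ → ℝ) (t : ℝ) : limitDistrib w t ≤ 1 :=
  (limitDistrib_le_truncDistrib w 0 t).trans (truncDistrib_le_one w 0 t)

theorem continuousWithinAt_limitDistrib (w : ℕ → ℝ) (t : ℝ) :
    ContinuousWithinAt (limitDistrib w) (Set.Ici t) t := by
  refine tendsto_order.2 ⟨fun a ha => ?_, fun b hb => ?_⟩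
  · filter_upwards [self_mem_nhdsWithin] with u hu using ha.trans_le (limitDistrib_mono w hu)
  · obtain ⟨y, hy⟩ := exists_lt_of_ciInf_lt hb
    filter_upwards [eventually_truncDistrib_eq w y t] with u hu
    exact (limitDistrib_le_truncDistrib w y u).trans_lt (hu ▸ hy)

theorem tendsto_limitDistrib_atBot {w : ℕ → ℝ} (hw : ∀ p, 0 ≤ w p) :
    Tendsto (limitDistrib w) atBot (𝓝 0) :=
  tendsto_const_nhds.congr' <| (eventually_lt_atBot (0 : ℝ)).mono fun t ht =>
    (le_antisymm (truncDistrib_of_neg hw 0 ht ▸ limitDistrib_le_truncDistrib w 0 t)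
      (limitDistrib_nonneg w t)).symm

theorem tendsto_limitDistrib_atTop {w : ℕ → ℝ} (hw : ∀ p, 0 ≤ w p)
    (hsum : Summable fun p : ℕ => w p / p) :
    Tendsto (limitDistrib w) atTop (𝓝 1) := by
  have hlow : Tendsto (fun t : ℝ => 1 - (∑' p : ℕ, w p / p) / t) atTop (𝓝 1) := by
    simpa using (tendsto_const_nhds (x := (1 : ℝ))).sub
      ((tendsto_const_nhds (x := ∑' p : ℕ, w p / p)).div_atTop tendsto_id)
  refine tendsto_of_tendsto_of_tendsto_of_le_of_le' hlow tendsto_const_nhds ?_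
    (Eventually.of_forall (limitDistrib_le_one w))
  filter_upwards [eventually_gt_atTop 0] with t ht
  exact le_ciInf fun y => one_sub_tsum_div_le_truncDistrib hw hsum y ht

theorem hasLimitingDistribution_primeSum {w : ℕ → ℝ} (hw : ∀ p, 0 ≤ w p)
    (hsum : Summable fun p : ℕ => w p / p) : HasLimitingDistribution (primeSum w) :=
  ⟨limitDistrib w, limitDistrib_mono w, continuousWithinAt_limitDistrib w,
    fun t => ⟨limitDistrib_nonneg w t, limitDistrib_le_one w t⟩, tendsto_limitDistrib_atBot hw,
    tendsto_limitDistrib_atTop hw hsum, fun _ ht =>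
      tendsto_card_filter_le_div_of_approx (truncPrimeSum_le_primeSum hw)
        (tendsto_truncDistrib w) (tendsto_limitDistrib hw)
        (fun _ hδ _ hε => eventually_card_filter_lt_primeSum_sub_truncPrimeSum_le hw hsum hδ hε) ht⟩

noncomputable def logHFactor (p : ℕ) : ℝ :=
  if 2 < p then Real.log (((p : ℝ) - 1) / ((p : ℝ) - 2)) else 0

theorem log_h_eq_primeSum (n : ℕ) : Real.log (h n) = primeSum logHFactor n := by
  rw [h, Real.log_prod, primeSum, sum_filter]
  · rfl
  · intro p hp
    have : (2 : ℝ) < p := by exact_mod_cast (mem_filter.1 hp).2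
    exact div_ne_zero (by linarith) (by linarith)

theorem logHFactor_nonneg (p : ℕ) : 0 ≤ logHFactor p := by
  unfold logHFactor
  split_ifs with hp
  · have : (2 : ℝ) < p := by exact_mod_cast hp
    exact Real.log_nonneg ((one_le_div (by linarith)).2 (by linarith))
  · exact le_rfl

theorem logHFactor_le (p : ℕ) : logHFactor p ≤ 3 / p := by
  unfold logHFactor
  split_ifs with hp
  · have : (3 : ℝ) ≤ p := by exact_mod_cast hp
    calc Real.log (((p : ℝ) - 1) / ((p : ℝ) - 2)) ≤ ((p : ℝ) - 1) / ((p : ℝ) - 2) - 1 :=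
          Real.log_le_sub_one_of_pos (div_pos (by linarith) (by linarith))
      _ = 1 / ((p : ℝ) - 2) := by field_simp [show (p : ℝ) - 2 ≠ 0 by linarith]; ring
      _ ≤ 3 / p := by rw [div_le_div_iff₀ (by linarith) (by linarith)]; linarith
  · positivity

theorem summable_logHFactor_div : Summable fun p : ℕ => logHFactor p / p := by
  refine .of_nonneg_of_le (fun p => div_nonneg (logHFactor_nonneg p) (Nat.cast_nonneg p))
    (fun p => ?_) ((Real.summable_one_div_nat_pow.2 one_lt_two).mul_left 3)
  calc logHFactor p / p ≤ 3 / p / p :=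
        div_le_div_of_nonneg_right (logHFactor_le p) (Nat.cast_nonneg p)
    _ = 3 * (1 / (p : ℝ) ^ 2) := by ring

/-- The additive function `f(n) = ln h(n)` possesses a limiting distribution: there is a
nondecreasing, right-continuous `F : ℝ → [0,1]` with `F → 0` at `-∞` and `F → 1` at `+∞`,
such that at every continuity point `t` of `F`,
`(1/x) #{n ≤ x : ln h(n) ≤ t} → F(t)` as `x → ∞`. -/
theorem log_h_limiting_distribution :
    ∃ F : ℝ → ℝ,
      Monotone F ∧
      (∀ t : ℝ, ContinuousWithinAt F (Set.Ici t) t) ∧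
      (∀ t : ℝ, 0 ≤ F t ∧ F t ≤ 1) ∧
      Tendsto F atBot (𝓝 0) ∧
      Tendsto F atTop (𝓝 1) ∧
      ∀ t : ℝ, ContinuousAt F t →
        Tendsto (fun x : ℕ =>
            (((Finset.Icc 1 x).filter (fun n => Real.log (h n) ≤ t)).card : ℝ) / (x : ℝ))
          atTop (𝓝 (F t)) := by
  have := hasLimitingDistribution_primeSum logHFactor_nonneg summable_logHFactor_div
  rwa [← funext log_h_eq_primeSum] at this
end
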